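/- Let S be a commutative semigroup, H a subsemigroup of S, and (H_i)_{i∈I} a family of subsets with H = ⋂_{i∈I} Sep(H_i). Then H is exactly one congruence class of P(H;H_i,I), and this class is an identity element of the factor semigroup S/P(H;H_i,I); i.e., for all u ∈ S and a ∈ H, (ua, u) ∈ P(H;H_i,I). -/

import Mathlib

/-!
In a commutative semigroup, `s` separates `A` exactly when multiplication by `s` neither enters
nor leaves `A`, i.e. `s * z ∈ A ↔ z ∈ A` for all `z`. Hence every element of
`H = ⋂ i, separator (Hi i)` can be cancelled from any context `x * _ * y` when testing membership
in some `Hi j`: elements of `H` are congruent to each other and act as an identity modulo the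
congruence. Conversely, if `b` is congruent to some `a ∈ H`, then testing the context `a * _ * z`
and cancelling `a` shows `b * z ∈ Hi j ↔ z ∈ Hi j`, so `b ∈ H`.
-/

def separator {S : Type*} [Mul S] (A : Set S) : Set S :=
  {x | (∀ a ∈ A, x * a ∈ A) ∧ (∀ a ∈ A, a * x ∈ A) ∧
       (∀ a ∉ A, x * a ∉ A) ∧ (∀ a ∉ A, a * x ∉ A)}

section Separator

variable {S : Type*}

theorem mul_mem_iff_of_mem_separator [Mul S] {A : Set S} {s : S} (hs : s ∈ separator A)
    (z : S) : s * z ∈ A ↔ z ∈ A :=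
  ⟨fun h => by_contra fun hz => hs.2.2.1 z hz h, hs.1 z⟩

theorem mem_separator_iff [CommSemigroup S] {A : Set S} {s : S} :
    s ∈ separator A ↔ ∀ z, s * z ∈ A ↔ z ∈ A := by
  refine ⟨mul_mem_iff_of_mem_separator, fun h => ?_⟩
  simp only [separator, Set.mem_ofPred_eq, mul_comm _ s]
  exact ⟨fun z => (h z).2, fun z => (h z).2, fun z hz hsz => hz ((h z).1 hsz),
    fun z hz hsz => hz ((h z).1 hsz)⟩

theorem mem_iInter_separator_iff [CommSemigroup S] {I : Type*} {A : I → Set S} {s : S} :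
    s ∈ ⋂ i, separator (A i) ↔ ∀ i z, s * z ∈ A i ↔ z ∈ A i := by
  simp only [Set.mem_iInter, mem_separator_iff]

theorem mul_mul_mem_iff_of_mem_separator [CommSemigroup S] {A : Set S} {s : S}
    (hs : s ∈ separator A) (x y : S) : x * s * y ∈ A ↔ x * y ∈ A := by
  rw [mul_comm x s, mul_assoc]
  exact mul_mem_iff_of_mem_separator hs (x * y)

end Separator

theorem H_is_identity_class_general {S : Type*} [CommSemigroup S] {I : Type*} (H : Set S) (Hi : I → Set S)
    (hsep : H = ⋂ i : I, separator (Hi i)) :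
    (∀ a ∈ H, ∀ b : S,
      ((∀ j : I, ∀ x y : S, (x * a * y ∈ Hi j ↔ x * b * y ∈ Hi j)) ↔ b ∈ H)) ∧
    (∀ u : S, ∀ a ∈ H, ∀ j : I, ∀ x y : S,
      (x * (u * a) * y ∈ Hi j ↔ x * u * y ∈ Hi j)) := by
  subst hsep
  have cancel : ∀ a ∈ ⋂ i, separator (Hi i), ∀ j x y, x * a * y ∈ Hi j ↔ x * y ∈ Hi j :=
    fun a ha j => mul_mul_mem_iff_of_mem_separator (Set.mem_iInter.mp ha j)
  refine ⟨fun a ha b => ⟨fun hab => ?_, fun hb j x y => ?_⟩, fun u a ha j x y => ?_⟩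
  · refine mem_iInter_separator_iff.mpr fun j z => ?_
    have h := hab j a z
    rw [cancel a ha, mul_comm a b, cancel a ha] at h
    exact h.symm.trans (mem_iInter_separator_iff.mp ha j z)
  · rw [cancel a ha, cancel b hb]
  · rw [← mul_assoc, cancel a ha]

theorem H_is_identity_class {S : Type*} [CommSemigroup S] {I : Type*} (H : Set S) (Hi : I → Set S)
    (hH : H.Nonempty) (hmul : ∀ a ∈ H, ∀ b ∈ H, a * b ∈ H)
    (hsep : H = ⋂ i : I, separator (Hi i)) :
    (∀ a ∈ H, ∀ b : S,
      ((∀ j : I, ∀ x y : S, (x * a * y ∈ Hi j ↔ x * b * y ∈ Hi j)) ↔ b ∈ H)) ∧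
    (∀ u : S, ∀ a ∈ H, ∀ j : I, ∀ x y : S,
      (x * (u * a) * y ∈ Hi j ↔ x * u * y ∈ Hi j)) :=
  H_is_identity_class_general H Hi hsep
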